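/- Let F be a field, X = X_1 ⊔ … ⊔ X_q a finite set of n variables partitioned into q disjoint blocks, and for each j ∈ [q] let g_j ∈ F[X_j] be a multilinear polynomial. Let (Y, Z) be any partition of X and set Y_j = Y ∩ X_j, Z_j = Z ∩ X_j. Then rank(M_{Y,Z}(∏_{j=1}^q g_j)) ≤ 2^{(n − ∑_{j=1}^q | |Y_j| − |Z_j| |)/2}. -/

import Mathlib

/-!
Splitting the exponent of every monomial along a block `X_j` of variables shows that the
partial derivative matrix of `g_j * h`, with `h` a polynomial in the other variables, is a
submatrix of the Kronecker product of the partial derivative matrices of `g_j` (for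
`(Y ∩ X_j, Z ∩ X_j)`) and of `h` (for `(Y \ X_j, Z \ X_j)`). Ranks are submultiplicative under
Kronecker products, and the matrix of `g_j` has rank at most its smaller dimension
`2 ^ min |Y_j| |Z_j|`, so the rank of `M_{Y,Z}(∏ g_j)` is at most `2 ^ ∑ min |Y_j| |Z_j|`.
Since `|Y_j| + |Z_j| = |X_j|`, that exponent is `(n - ∑ ||Y_j| - |Z_j||) / 2`.
-/

open MvPolynomial

/-- The partial derivative matrix `M_{Y,Z}(f)` of a multilinear polynomial `f` with
respect to a partition `(Y, Z)` of the variables: rows are indexed by subsets `A ⊆ Y`,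
columns by subsets `B ⊆ Z`, and the `(A, B)` entry is the coefficient in `f` of the
monomial `∏_{y ∈ A} y · ∏_{z ∈ B} z`. -/
noncomputable def pdMatrix {F : Type*} [Field F] {V : Type*} [Fintype V] [DecidableEq V]
    (f : MvPolynomial V F) (Y Z : Finset V) :
    Matrix {A : Finset V // A ⊆ Y} {B : Finset V // B ⊆ Z} F :=
  fun A B => f.coeff ((∑ v ∈ A.1, Finsupp.single v 1) + ∑ v ∈ B.1, Finsupp.single v 1)

open scoped Kronecker

namespace Matrix

variable {K : Type*} [Field K] {m n m' n' : Type*} [Fintype n] [Fintype n']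

theorem exists_eq_mul_of_rank (A : Matrix m n K) :
    ∃ (P : Matrix m (Fin A.rank) K) (Q : Matrix (Fin A.rank) n K), A = P * Q := by
  classical
  let b : Module.Basis (Fin A.rank) K (LinearMap.range A.mulVecLin) :=
    Module.finBasisOfFinrankEq K _ rfl
  have hcol (j : n) : A.col j ∈ LinearMap.range A.mulVecLin :=
    ⟨Pi.single j 1, by ext i; simp [mulVec_single]⟩
  refine ⟨of fun i k => (b k : m → K) i, of fun k j => b.repr ⟨A.col j, hcol j⟩ k, ?_⟩
  ext i j
  have h := congrArg (fun w : LinearMap.range A.mulVecLin => (w : m → K) i)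
    (b.sum_repr ⟨A.col j, hcol j⟩)
  simp only [Submodule.coe_sum, SetLike.val_smul, Finset.sum_apply, Pi.smul_apply,
    smul_eq_mul] at h
  simpa only [mul_apply, of_apply, col_apply, mul_comm] using h.symm

theorem rank_kronecker_le (A : Matrix m n K) (B : Matrix m' n' K) :
    (A ⊗ₖ B).rank ≤ A.rank * B.rank := by
  obtain ⟨P, Q, hA⟩ := A.exists_eq_mul_of_rank
  obtain ⟨P', Q', hB⟩ := B.exists_eq_mul_of_rank
  calc (A ⊗ₖ B).rank = (P ⊗ₖ P' * Q ⊗ₖ Q').rank := by rw [← mul_kronecker_mul, ← hA, ← hB]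
    _ ≤ (P ⊗ₖ P').rank := rank_mul_le_left _ _
    _ ≤ A.rank * B.rank := by simpa using rank_le_card_width (P ⊗ₖ P')

end Matrix

theorem Finsupp.support_sum_single_one_subset {α : Type*} (A : Finset α) :
    (∑ v ∈ A, Finsupp.single v 1 : α →₀ ℕ).support ⊆ A := by
  classical
  intro w hw
  by_contra hwA
  simp [Finsupp.finsetSum_apply, Finsupp.single_apply, hwA] at hw

namespace Finset

theorem card_inter_add_card_inter {α : Type*} [DecidableEq α] {Y Z X : Finset α}
    (hYZ : Disjoint Y Z) (hX : X ⊆ Y ∪ Z) : #(Y ∩ X) + #(Z ∩ X) = #X := by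
  rw [← card_union_of_disjoint (hYZ.mono inter_subset_left inter_subset_left),
    ← union_inter_distrib_right, inter_eq_right.2 hX]

end Finset

namespace MvPolynomial

variable {σ R : Type*} [CommSemiring R]

theorem coeff_mul_add_of_disjoint_vars {f g : MvPolynomial σ R} {S : Finset σ}
    (hf : f.vars ⊆ S) (hg : Disjoint g.vars S) {μ ν : σ →₀ ℕ}
    (hμ : μ.support ⊆ S) (hν : Disjoint ν.support S) :
    (f * g).coeff (μ + ν) = f.coeff μ * g.coeff ν := by
  classical
  rw [coeff_mul]
  refine Finset.sum_eq_single (μ, ν) ?_ (fun h => (h (by simp)).elim)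
  rintro ⟨u, v⟩ huv hne
  by_contra hne_zero
  have hu : u.support ⊆ S :=
    (support_subset_vars_of_mem_support
      (mem_support_iff.2 (left_ne_zero_of_mul hne_zero))).trans hf
  have hv : Disjoint v.support S :=
    hg.mono_left (support_subset_vars_of_mem_support
      (mem_support_iff.2 (right_ne_zero_of_mul hne_zero)))
  have huμ : u = μ := by
    ext w
    have hw := DFunLike.congr_fun (Finset.HasAntidiagonal.mem_antidiagonal.1 huv) w
    simp only [Finsupp.add_apply] at hw
    by_cases hwS : w ∈ S
    · rw [Finsupp.notMem_support_iff.1 (Finset.disjoint_right.1 hv hwS),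
        Finsupp.notMem_support_iff.1 (Finset.disjoint_right.1 hν hwS)] at hw
      simpa using hw
    · rw [Finsupp.notMem_support_iff.1 (fun h => hwS (hu h)),
        Finsupp.notMem_support_iff.1 (fun h => hwS (hμ h))]
  have hvν : v = ν := add_left_cancel (huμ ▸ Finset.HasAntidiagonal.mem_antidiagonal.1 huv)
  exact hne (by rw [huμ, hvν])

end MvPolynomial

section PartialDerivativeMatrix

open Finset Function

variable {F : Type*} [Field F] {V : Type*} [Fintype V] [DecidableEq V]

theorem pdMatrix_one (Y Z : Finset V) :
    pdMatrix (1 : MvPolynomial V F) Y Z =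
      Matrix.vecMulVec (fun A => if A.1 = ∅ then 1 else 0)
        (fun B => if B.1 = ∅ then 1 else 0) := by
  ext A B
  have hzero (T : Finset V) : (∑ v ∈ T, Finsupp.single v 1 : V →₀ ℕ) = 0 ↔ T = ∅ := by
    simp [sum_eq_zero_iff, eq_empty_iff_forall_notMem]
  simp only [pdMatrix, coeff_one, Matrix.vecMulVec_apply, eq_comm (a := (0 : V →₀ ℕ)),
    add_eq_zero, hzero]
  split_ifs <;> simp_all

theorem rank_pdMatrix_le_pow_min (f : MvPolynomial V F) (Y Z : Finset V) :
    (pdMatrix f Y Z).rank ≤ 2 ^ min #Y #Z := by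
  have hcard (W : Finset V) : Fintype.card {A : Finset V // A ⊆ W} = 2 ^ #W := by
    rw [Fintype.card_subtype, filter_subset_univ, card_powerset]
  rw [(pow_right_mono₀ one_le_two).map_min, ← hcard, ← hcard]
  exact le_min (Matrix.rank_le_card_height _) (Matrix.rank_le_card_width _)

theorem pdMatrix_mul_eq_submatrix_kronecker {f g : MvPolynomial V F} {S : Finset V}
    (hf : f.vars ⊆ S) (hg : Disjoint g.vars S) (Y Z : Finset V) :
    pdMatrix (f * g) Y Z =
      (pdMatrix f (Y ∩ S) (Z ∩ S) ⊗ₖ pdMatrix g (Y \ S) (Z \ S)).submatrix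
        (fun A => (⟨A.1 ∩ S, inter_subset_inter_right A.2⟩,
          ⟨A.1 \ S, sdiff_subset_sdiff A.2 le_rfl⟩))
        (fun B => (⟨B.1 ∩ S, inter_subset_inter_right B.2⟩,
          ⟨B.1 \ S, sdiff_subset_sdiff B.2 le_rfl⟩)) := by
  ext A B
  have hin (T : Finset V) : (∑ v ∈ T ∩ S, Finsupp.single v 1 : V →₀ ℕ).support ⊆ S :=
    (Finsupp.support_sum_single_one_subset _).trans inter_subset_right
  have hout (T : Finset V) : Disjoint (∑ v ∈ T \ S, Finsupp.single v 1 : V →₀ ℕ).support S :=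
    disjoint_of_subset_left (Finsupp.support_sum_single_one_subset _) sdiff_disjoint
  simp only [Matrix.submatrix_apply, Matrix.kroneckerMap_apply, pdMatrix]
  rw [← coeff_mul_add_of_disjoint_vars hf hg
    (Finsupp.support_add.trans (union_subset (hin A.1) (hin B.1)))
    (disjoint_of_subset_left Finsupp.support_add (disjoint_union_left.2 ⟨hout A.1, hout B.1⟩)),
    ← sum_inter_add_sum_sdiff A.1 S, ← sum_inter_add_sum_sdiff B.1 S]
  abel_nf

theorem rank_pdMatrix_mul_le {f g : MvPolynomial V F} {S : Finset V}
    (hf : f.vars ⊆ S) (hg : Disjoint g.vars S) (Y Z : Finset V) :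
    (pdMatrix (f * g) Y Z).rank ≤
      (pdMatrix f (Y ∩ S) (Z ∩ S)).rank * (pdMatrix g (Y \ S) (Z \ S)).rank := by
  rw [pdMatrix_mul_eq_submatrix_kronecker hf hg]
  exact (Matrix.rank_submatrix_le _ _ _).trans (Matrix.rank_kronecker_le _ _)

theorem rank_pdMatrix_prod_le_prod_pow_min {ι : Type*} [DecidableEq ι] (s : Finset ι)
    (X : ι → Finset V) (hX : (s : Set ι).PairwiseDisjoint X) (g : ι → MvPolynomial V F)
    (hg : ∀ j ∈ s, (g j).vars ⊆ X j) (Y Z : Finset V) :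
    (pdMatrix (∏ j ∈ s, g j) Y Z).rank ≤ ∏ j ∈ s, 2 ^ min #(Y ∩ X j) #(Z ∩ X j) := by
  induction s using Finset.induction_on generalizing Y Z with
  | empty => simpa [pdMatrix_one] using Matrix.rank_vecMulVec_le _ _
  | insert j s hj ih =>
    rw [coe_insert, Set.pairwiseDisjoint_insert_of_notMem (mod_cast hj)] at hX
    have hXj (i : ι) (hi : i ∈ s) : Disjoint (X i) (X j) := (hX.2 i (mem_coe.2 hi)).symm
    have hvars : Disjoint (∏ i ∈ s, g i).vars (X j) :=
      disjoint_of_subset_left (vars_prod g) ((disjoint_biUnion_left _ _ _).2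
        fun i hi => disjoint_of_subset_left (hg i (mem_insert_of_mem hi)) (hXj i hi))
    have hsdiff (T : Finset V) (i : ι) (hi : i ∈ s) : (T \ X j) ∩ X i = T ∩ X i := by
      rw [sdiff_inter_right_comm, sdiff_eq_self_of_disjoint
        (disjoint_of_subset_left inter_subset_right (hXj i hi))]
    rw [prod_insert hj, prod_insert hj]
    calc _ ≤ (pdMatrix (g j) (Y ∩ X j) (Z ∩ X j)).rank *
          (pdMatrix (∏ i ∈ s, g i) (Y \ X j) (Z \ X j)).rank :=
          rank_pdMatrix_mul_le (hg j (mem_insert_self j s)) hvars Y Z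
      _ ≤ 2 ^ min #(Y ∩ X j) #(Z ∩ X j) *
          ∏ i ∈ s, 2 ^ min #((Y \ X j) ∩ X i) #((Z \ X j) ∩ X i) :=
          Nat.mul_le_mul (rank_pdMatrix_le_pow_min _ _ _)
            (ih hX.1 (fun i hi => hg i (mem_insert_of_mem hi)) _ _)
      _ = _ := by
          congr 1
          exact prod_congr rfl fun i hi => by rw [hsdiff Y i hi, hsdiff Z i hi]

theorem sum_min_card_inter_eq {ι : Type*} [Fintype ι] {X : ι → Finset V}
    (hX : Pairwise (Disjoint on X)) (hXcover : univ.biUnion X = univ) {Y Z : Finset V}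
    (hYZ : Disjoint Y Z) (hYZcover : Y ∪ Z = univ) :
    ∑ j, min #(Y ∩ X j) #(Z ∩ X j) =
      (Fintype.card V - ∑ j, ((#(Y ∩ X j) : ℤ) - #(Z ∩ X j)).natAbs) / 2 := by
  have hsum : ∑ j, (#(Y ∩ X j) + #(Z ∩ X j)) = Fintype.card V := by
    rw [← card_univ, ← hXcover, card_biUnion fun i _ j _ h => hX h]
    exact sum_congr rfl fun j _ => card_inter_add_card_inter hYZ (hYZcover ▸ subset_univ _)
  have hsplit (a b : ℕ) : a + b = ((a : ℤ) - b).natAbs + 2 * min a b := by omega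
  rw [sum_congr rfl fun j _ => hsplit _ _, sum_add_distrib, ← mul_sum] at hsum
  omega

end PartialDerivativeMatrix

theorem rank_pdMatrix_prod_le_general
    {F : Type*} [Field F] {V : Type*} [Fintype V] [DecidableEq V] (q : ℕ)
    (Xb : Fin q → Finset V)
    (hXdisj : ∀ j j', j ≠ j' → Disjoint (Xb j) (Xb j'))
    (hXcover : Finset.univ.biUnion Xb = (Finset.univ : Finset V))
    (g : Fin q → MvPolynomial V F)
    (hvars : ∀ j, (g j).vars ⊆ Xb j)
    (Y Z : Finset V) (hYZdisj : Disjoint Y Z) (hYZcover : Y ∪ Z = Finset.univ) :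
    (pdMatrix (∏ j, g j) Y Z).rank ≤
      2 ^ ((Fintype.card V -
        ∑ j, (((Y ∩ Xb j).card : ℤ) - ((Z ∩ Xb j).card : ℤ)).natAbs) / 2) := by
  calc (pdMatrix (∏ j, g j) Y Z).rank
      ≤ ∏ j, 2 ^ min (Y ∩ Xb j).card (Z ∩ Xb j).card :=
        rank_pdMatrix_prod_le_prod_pow_min _ Xb (fun i _ j _ h => hXdisj i j h) g
          (fun j _ => hvars j) Y Z
    _ = 2 ^ ∑ j, min (Y ∩ Xb j).card (Z ∩ Xb j).card := Finset.prod_pow_eq_pow_sum _ _ _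
    _ = _ := by
        rw [sum_min_card_inter_eq (fun i j h => hXdisj i j h) hXcover hYZdisj hYZcover]

/-- If the `n` variables are partitioned into blocks `X_1 ⊔ ⋯ ⊔ X_q` and each `g_j` is a
multilinear polynomial in the variables of `X_j`, then for any partition `(Y, Z)` of the
variables, `rank M_{Y,Z}(∏_j g_j) ≤ 2^{(n - ∑_j ||Y ∩ X_j| - |Z ∩ X_j||)/2}`. -/
theorem rank_pdMatrix_prod_le
    {F : Type*} [Field F] {V : Type*} [Fintype V] [DecidableEq V] (q : ℕ)
    (Xb : Fin q → Finset V)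
    (hXdisj : ∀ j j', j ≠ j' → Disjoint (Xb j) (Xb j'))
    (hXcover : Finset.univ.biUnion Xb = (Finset.univ : Finset V))
    (g : Fin q → MvPolynomial V F)
    (hml : ∀ j v, (g j).degreeOf v ≤ 1)
    (hvars : ∀ j, (g j).vars ⊆ Xb j)
    (Y Z : Finset V) (hYZdisj : Disjoint Y Z) (hYZcover : Y ∪ Z = Finset.univ) :
    (pdMatrix (∏ j, g j) Y Z).rank ≤
      2 ^ ((Fintype.card V -
        ∑ j, (((Y ∩ Xb j).card : ℤ) - ((Z ∩ Xb j).card : ℤ)).natAbs) / 2) :=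
  rank_pdMatrix_prod_le_general q Xb hXdisj hXcover g hvars Y Z hYZdisj hYZcover
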